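/- arXiv:1410.6394 — 2 statements merged into one kernel-verified Lean document; each statement's English description precedes it below -/
import Mathlib

section
/- Let d, m ≥ 1, θ₀ ∈ (0,π), θ ∈ (θ₀,π), κ ∈ (0,1), K > 0, and let A_♯(ξ) = Σ_{|α|=m} a_α ξ^α with a_α ∈ ℂ, |a_α| ≤ K, satisfy A_♯(ξ) ∈ Σ_{θ₀} and |A_♯(ξ)| ≥ κ for all ξ ∈ ℝ^d with |ξ| = 1. For λ ∈ Σ_{π-θ} and a multi-index β with |β| ≤ m, define ℳ: ℝ^d → ℂ by ℳ(ξ) = λ^{1-|β|/m} ξ^β (λ + A_♯(ξ))^{-1}, where λ^{1-|β|/m} denotes the principal branch power. Then for every multi-index γ ∈ ℕ₀^d there exists a constant C_γ, depending only on d, γ, m, θ - θ₀, K and κ (and in particular independent of λ ∈ Σ_{π-θ}, of β with |β| ≤ m, and of the particular coefficients a_α), such that |ξ^γ ∂^γ ℳ(ξ)| ≤ C_γ for all ξ ∈ ℝ^d ∖ {0}. -/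
open MeasureTheory Set Real Complex

/-- The open sector `Σ_θ = {z ∈ ℂ ∖ {0} : |arg z| < θ}`. -/
def sector (θ : ℝ) : Set ℂ := {z : ℂ | z ≠ 0 ∧ |Complex.arg z| < θ}

/-- The monomial `ξ^α = ξ₁^{α₁} ⋯ ξ_d^{α_d}` for a multi-index `α`. -/
def xiPow {d : ℕ} (ξ : Fin d → ℝ) (α : Fin d → ℕ) : ℝ := ∏ i, ξ i ^ α i

/-- The order `|α| = α₁ + ⋯ + α_d` of a multi-index. -/
def mOrder {d : ℕ} (α : Fin d → ℕ) : ℕ := ∑ i, α i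

/-- The homogeneous symbol `A_♯(ξ) = Σ_{|α| = m} a_α ξ^α`. -/
noncomputable def principalSymbol {d : ℕ} (m : ℕ) (a : (Fin d → ℕ) → ℂ)
    (ξ : Fin d → ℝ) : ℂ :=
  ∑ α : Fin d → Fin (m + 1),
    if mOrder (fun i => (α i : ℕ)) = m then
      a (fun i => (α i : ℕ)) * (xiPow ξ fun i => (α i : ℕ)) else 0

/-- The partial derivative `∂_i F` of a function `F : ℝ^d → ℂ`. -/
noncomputable def pderivI {d : ℕ} (i : Fin d) (F : (Fin d → ℝ) → ℂ) : (Fin d → ℝ) → ℂ :=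
  fun x => fderiv ℝ F x (Pi.single i 1)

/-- The iterated partial derivative `∂_i^n F`. -/
noncomputable def pderivPow {d : ℕ} (i : Fin d) : ℕ → ((Fin d → ℝ) → ℂ) → ((Fin d → ℝ) → ℂ)
  | 0, F => F
  | n + 1, F => pderivI i (pderivPow i n F)

/-- The mixed partial derivative `∂^γ F = ∂_1^{γ_1} ⋯ ∂_d^{γ_d} F`. -/
noncomputable def mpderiv {d : ℕ} (γ : Fin d → ℕ) (F : (Fin d → ℝ) → ℂ) :
    (Fin d → ℝ) → ℂ :=
  (List.finRange d).foldr (fun i G => pderivPow i (γ i) G) F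

/-- The Mihlin-type multiplier `ℳ(ξ) = λ^{1-|β|/m} ξ^β (λ + A_♯(ξ))⁻¹`
(with the principal branch power `λ^{1-|β|/m}`). -/
noncomputable def mihlinSymbol {d : ℕ} (m : ℕ) (a : (Fin d → ℕ) → ℂ) (lam : ℂ)
    (β : Fin d → ℕ) (ξ : Fin d → ℝ) : ℂ :=
  lam ^ ((1 - (mOrder β : ℝ) / m : ℝ) : ℂ) * (xiPow ξ β : ℂ) *
    (lam + principalSymbol m a ξ)⁻¹

namespace Stmt16Aux
open Metric

variable {d : ℕ}


variable {d : ℕ}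

noncomputable def iota (d : ℕ) : (Fin d → ℝ) →L[ℝ] (Fin d → ℂ) :=
  ContinuousLinearMap.pi fun i => Complex.ofRealCLM.comp (ContinuousLinearMap.proj i)

@[simp] lemma iota_apply (x : Fin d → ℝ) (i : Fin d) : iota d x i = (x i : ℂ) := rfl

lemma iota_single (i : Fin d) : iota d (Pi.single i (1:ℝ)) = Pi.single i (1:ℂ) := by
  funext j
  rcases eq_or_ne j i with h | h
  · subst h; simp
  · simp [Pi.single_eq_of_ne h]

noncomputable def Dp (i : Fin d) (f : (Fin d → ℂ) → ℂ) : (Fin d → ℂ) → ℂ :=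
  fun z => fderiv ℂ f z (Pi.single i 1)

lemma Dp_analytic {U : Set (Fin d → ℂ)} {f : (Fin d → ℂ) → ℂ}
    (hf : AnalyticOnNhd ℂ f U) (i : Fin d) : AnalyticOnNhd ℂ (Dp i f) U :=
by
  have h := (ContinuousLinearMap.apply ℂ ℂ (Pi.single i (1:ℂ))).comp_analyticOnNhd hf.fderiv
  have e : Dp i f = (⇑(ContinuousLinearMap.apply ℂ ℂ (Pi.single i (1:ℂ))) ∘ fderiv ℂ f) := rfl
  rw [e]; exact h

lemma pderivI_comp {U : Set (Fin d → ℂ)} {f : (Fin d → ℂ) → ℂ}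
    (hf : AnalyticOnNhd ℂ f U) (hU : ∀ x : Fin d → ℝ, iota d x ∈ U) (i : Fin d) :
    pderivI i (fun x => f (iota d x)) = fun x => Dp i f (iota d x) := by
  funext x
  have hfd : DifferentiableAt ℂ f (iota d x) := (hf _ (hU x)).differentiableAt
  have h1 : HasFDerivAt (fun x => f (iota d x))
      (((fderiv ℂ f (iota d x)).restrictScalars ℝ).comp (iota d : (Fin d → ℝ) →L[ℝ] (Fin d → ℂ))) x :=
    (hfd.hasFDerivAt.restrictScalars ℝ).comp x (iota d).hasFDerivAt
  show fderiv ℝ (fun x => f (iota d x)) x (Pi.single i 1) = _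
  rw [h1.fderiv]
  show fderiv ℂ f (iota d x) (iota d (Pi.single i (1:ℝ))) = _
  rw [iota_single]
  rfl

noncomputable def DpPow (i : Fin d) : ℕ → ((Fin d → ℂ) → ℂ) → ((Fin d → ℂ) → ℂ)
  | 0, f => f
  | n + 1, f => Dp i (DpPow i n f)

lemma DpPow_analytic {U : Set (Fin d → ℂ)} {f : (Fin d → ℂ) → ℂ}
    (hf : AnalyticOnNhd ℂ f U) (i : Fin d) (n : ℕ) : AnalyticOnNhd ℂ (DpPow i n f) U := by
  induction n with
  | zero => exact hf
  | succ n ih => exact Dp_analytic ih i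

lemma pderivPow_comp {U : Set (Fin d → ℂ)} {f : (Fin d → ℂ) → ℂ}
    (hf : AnalyticOnNhd ℂ f U) (hU : ∀ x : Fin d → ℝ, iota d x ∈ U) (i : Fin d) (n : ℕ) :
    pderivPow i n (fun x => f (iota d x)) = fun x => DpPow i n f (iota d x) := by
  induction n with
  | zero => rfl
  | succ n ih =>
    show pderivI i (pderivPow i n (fun x => f (iota d x))) = _
    rw [ih]
    exact pderivI_comp (DpPow_analytic hf i n) hU i

noncomputable def DpMulti (γ : Fin d → ℕ) (f : (Fin d → ℂ) → ℂ) : (Fin d → ℂ) → ℂ :=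
  (List.finRange d).foldr (fun i g => DpPow i (γ i) g) f

lemma foldr_analytic {U : Set (Fin d → ℂ)} {f : (Fin d → ℂ) → ℂ}
    (hf : AnalyticOnNhd ℂ f U) (γ : Fin d → ℕ) (l : List (Fin d)) :
    AnalyticOnNhd ℂ (l.foldr (fun i g => DpPow i (γ i) g) f) U := by
  induction l with
  | nil => exact hf
  | cons i l ih => exact DpPow_analytic ih i (γ i)

lemma foldr_comp {U : Set (Fin d → ℂ)} {f : (Fin d → ℂ) → ℂ}
    (hf : AnalyticOnNhd ℂ f U) (hU : ∀ x : Fin d → ℝ, iota d x ∈ U) (γ : Fin d → ℕ)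
    (l : List (Fin d)) :
    l.foldr (fun i G => pderivPow i (γ i) G) (fun x => f (iota d x)) =
      fun x => (l.foldr (fun i g => DpPow i (γ i) g) f) (iota d x) := by
  induction l with
  | nil => rfl
  | cons i l ih =>
    show pderivPow i (γ i) (l.foldr _ _) = _
    rw [ih]
    exact pderivPow_comp (foldr_analytic hf γ l) hU i (γ i)

lemma hasDerivAt_update (z : Fin d → ℂ) (i : Fin d) (w : ℂ) :
    HasDerivAt (fun w : ℂ => Function.update z i w) (Pi.single i (1:ℂ)) w := by
  have e : (fun w : ℂ => Function.update z i w)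
      = fun w : ℂ => Function.update z i 0 + w • (Pi.single i (1:ℂ) : Fin d → ℂ) := by
    funext w
    funext j
    rcases eq_or_ne j i with h | h
    · subst h; simp
    · simp [Function.update_of_ne h, Pi.single_eq_of_ne h]
  rw [e]
  simpa using ((hasDerivAt_id w).smul_const (Pi.single i (1:ℂ) : Fin d → ℂ)).const_add (Function.update z i 0)

lemma cauchy_step {U : Set (Fin d → ℂ)} {f : (Fin d → ℂ) → ℂ}
    (hf : AnalyticOnNhd ℂ f U) {z₀ : Fin d → ℂ} {ρ M h : ℝ}
    (hball : closedBall z₀ ρ ⊆ U)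
    (hM : ∀ z ∈ closedBall z₀ ρ, ‖f z‖ ≤ M) (hh : 0 < h) (i : Fin d) :
    ∀ z ∈ closedBall z₀ (ρ - h), ‖Dp i f z‖ ≤ M / h := by
  intro z hz
  rw [mem_closedBall] at hz
  have hρh : 0 ≤ ρ - h := le_trans dist_nonneg hz
  have hρ : 0 ≤ ρ := le_trans hρh (by linarith)
  set g : ℂ → ℂ := fun w => f (Function.update z i w) with hg_def
  have hmap : ∀ w : ℂ, dist w (z i) ≤ h → Function.update z i w ∈ closedBall z₀ ρ := by
    intro w hw
    rw [mem_closedBall, dist_pi_le_iff hρ]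
    intro j
    rcases eq_or_ne j i with hji | hji
    · subst hji
      rw [Function.update_self]
      calc dist w (z₀ j) ≤ dist w (z j) + dist (z j) (z₀ j) := dist_triangle _ _ _
        _ ≤ h + (ρ - h) := add_le_add hw (le_trans (dist_le_pi_dist z z₀ j) hz)
        _ = ρ := by ring
    · rw [Function.update_of_ne hji]
      exact le_trans (le_trans (dist_le_pi_dist z z₀ j) hz) (by linarith)
  have hgd : DiffContOnCl ℂ g (ball (z i) h) := by
    have hdo : DifferentiableOn ℂ g (closedBall (z i) h) := by
      intro w hw
      rw [mem_closedBall] at hw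
      exact (((hf _ (hball (hmap w hw))).differentiableAt.comp w
        (hasDerivAt_update z i w).differentiableAt)).differentiableWithinAt
    exact DifferentiableOn.diffContOnCl (by rwa [closure_ball _ hh.ne'])
  have hsph : ∀ w ∈ sphere (z i) h, ‖g w‖ ≤ M := by
    intro w hw
    exact hM _ (hmap w (le_of_eq hw))
  have hfz' : DifferentiableAt ℂ f (Function.update z i (z i)) := by
    rw [Function.update_eq_self]
    exact (hf _ (hball (closedBall_subset_closedBall (by linarith) hz))).differentiableAt
  have hgderiv : HasDerivAt g
      (fderiv ℂ f (Function.update z i (z i)) (Pi.single i (1:ℂ))) (z i) :=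
    hfz'.hasFDerivAt.comp_hasDerivAt _ (hasDerivAt_update z i (z i))
  rw [Function.update_eq_self] at hgderiv
  have := Complex.norm_deriv_le_of_forall_mem_sphere_norm_le hh hgd hsph
  rwa [hgderiv.deriv] at this

lemma cauchy_pow {U : Set (Fin d → ℂ)} {f : (Fin d → ℂ) → ℂ}
    (hf : AnalyticOnNhd ℂ f U) {z₀ : Fin d → ℂ} {ρ M h : ℝ}
    (hball : closedBall z₀ ρ ⊆ U)
    (hM : ∀ z ∈ closedBall z₀ ρ, ‖f z‖ ≤ M) (hh : 0 < h) (i : Fin d) (n : ℕ) :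
    ∀ z ∈ closedBall z₀ (ρ - n * h), ‖DpPow i n f z‖ ≤ M / h ^ n := by
  induction n with
  | zero => intro z hz; show ‖f z‖ ≤ M / h ^ 0; simpa using hM z (by simpa using hz)
  | succ n ih =>
    have hsub : closedBall z₀ (ρ - n * h) ⊆ U :=
      le_trans (closedBall_subset_closedBall (by nlinarith)) hball
    have step := cauchy_step (DpPow_analytic hf i n) hsub ih hh i
    intro z hz
    have hz' : z ∈ closedBall z₀ (ρ - n * h - h) := by
      have e : (ρ : ℝ) - ((n:ℕ) + 1 : ℕ) * h = ρ - n * h - h := by push_cast; ring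
      rwa [e] at hz
    have := step z hz'
    calc ‖DpPow i (n+1) f z‖ = ‖Dp i (DpPow i n f) z‖ := rfl
      _ ≤ M / h ^ n / h := this
      _ = M / h ^ (n + 1) := by rw [div_div, ← pow_succ]

lemma cauchy_foldr {U : Set (Fin d → ℂ)} {f : (Fin d → ℂ) → ℂ}
    (hf : AnalyticOnNhd ℂ f U) {z₀ : Fin d → ℂ} {ρ M h : ℝ}
    (hball : closedBall z₀ ρ ⊆ U)
    (hM : ∀ z ∈ closedBall z₀ ρ, ‖f z‖ ≤ M) (hh : 0 < h) (γ : Fin d → ℕ)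
    (l : List (Fin d)) :
    ∀ z ∈ closedBall z₀ (ρ - (l.map γ).sum * h),
      ‖(l.foldr (fun i g => DpPow i (γ i) g) f) z‖ ≤ M / h ^ (l.map γ).sum := by
  induction l with
  | nil => intro z hz; simpa using hM z (by simpa using hz)
  | cons i l ih =>
    have hsub : closedBall z₀ (ρ - (l.map γ).sum * h) ⊆ U :=
      le_trans (closedBall_subset_closedBall (by nlinarith)) hball
    have step := cauchy_pow (foldr_analytic hf γ l) hsub ih hh i (γ i)
    intro z hz
    have hz' : z ∈ closedBall z₀ (ρ - (l.map γ).sum * h - γ i * h) := by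
      have : (ρ : ℝ) - ((i :: l).map γ).sum * h = ρ - (l.map γ).sum * h - γ i * h := by
        simp only [List.map_cons, List.sum_cons]; push_cast; ring
      rwa [this] at hz
    have := step z hz'
    calc ‖((i :: l).foldr (fun i g => DpPow i (γ i) g) f) z‖
        = ‖DpPow i (γ i) (l.foldr (fun i g => DpPow i (γ i) g) f) z‖ := rfl
      _ ≤ M / h ^ (l.map γ).sum / h ^ γ i := this
      _ = M / h ^ ((i :: l).map γ).sum := by
          rw [div_div, ← pow_add]
          simp [List.map_cons, List.sum_cons, Nat.add_comm]



/-- Sector separation: if `lam` and `z` lie in sectors whose "angle of opposition" is at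
least `e ∈ (0, π/2]`, then `|lam + z| ≥ sin e * (|lam| + |z|) / 2`. -/
lemma sector_lower {lam z : ℂ} {a b e : ℝ} (hlam : lam ≠ 0) (hz : z ≠ 0)
    (ha : |Complex.arg lam| ≤ a) (hb : |Complex.arg z| ≤ b)
    (hab : a + b ≤ Real.pi - e) (he : 0 < e) (he2 : e ≤ Real.pi / 2) :
    Real.sin e * (‖lam‖ + ‖z‖) / 2 ≤ ‖lam + z‖ := by
  have ha0 : 0 ≤ a := le_trans (abs_nonneg _) ha
  have hb0 : 0 ≤ b := le_trans (abs_nonneg _) hb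
  have hπ : Real.pi - e < Real.pi := by linarith
  have hargsum : |(-Complex.arg lam) + Complex.arg z| ≤ Real.pi - e := by
    calc |(-Complex.arg lam) + Complex.arg z| ≤ |(-Complex.arg lam)| + |Complex.arg z| :=
          abs_add_le _ _
      _ ≤ a + b := by rw [abs_neg]; exact add_le_add ha hb
      _ ≤ Real.pi - e := hab
  have hconj : Complex.arg (starRingEnd ℂ lam) = -Complex.arg lam := by
    rw [Complex.arg_conj]
    have : Complex.arg lam ≠ Real.pi := by
      intro hc
      rw [hc] at ha
      rw [_root_.abs_of_nonneg Real.pi_pos.le] at ha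
      linarith
    simp [this]
  have hconj0 : (starRingEnd ℂ) lam ≠ 0 := by simpa using hlam
  have hmul : ((starRingEnd ℂ) lam * z).arg = -Complex.arg lam + Complex.arg z := by
    rw [← hconj]
    apply Complex.arg_mul hconj0 hz
    rw [hconj]
    constructor
    · have := abs_le.1 hargsum
      linarith [this.1, he]
    · have := abs_le.1 hargsum
      linarith [this.2, he]
  have hmul0 : (starRingEnd ℂ) lam * z ≠ 0 := mul_ne_zero hconj0 hz
  have hre : ((starRingEnd ℂ) lam * z).re
      = ‖lam‖ * ‖z‖ * Real.cos (-Complex.arg lam + Complex.arg z) := by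
    have habs : ‖(starRingEnd ℂ) lam * z‖ = ‖lam‖ * ‖z‖ := by
      rw [norm_mul, Complex.norm_conj]
    have hcosa := Complex.cos_arg hmul0
    rw [hmul, habs] at hcosa
    rw [hcosa]
    have hAB0 : ‖lam‖ * ‖z‖ ≠ 0 :=
      mul_ne_zero (norm_ne_zero_iff.mpr hlam) (norm_ne_zero_iff.mpr hz)
    field_simp
  have hcos : -Real.cos e ≤ Real.cos (-Complex.arg lam + Complex.arg z) := by
    rw [← Real.cos_pi_sub]
    rw [← Real.cos_abs (-Complex.arg lam + Complex.arg z)]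
    apply Real.cos_le_cos_of_nonneg_of_le_pi (abs_nonneg _) hπ.le hargsum
  -- |lam + z|^2 = |lam|^2 + |z|^2 + 2 * re(conj lam * z)
  have hsq : ‖lam + z‖ ^ 2
      = ‖lam‖ ^ 2 + ‖z‖ ^ 2 + 2 * ((starRingEnd ℂ) lam * z).re := by
    rw [Complex.sq_norm, Complex.sq_norm, Complex.sq_norm]
    simp [Complex.normSq_apply, Complex.add_re, Complex.add_im, Complex.mul_re,
      Complex.conj_re, Complex.conj_im]
    ring
  set A := ‖lam‖ with hA
  set B := ‖z‖ with hB
  set X := ‖lam + z‖ with hX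
  set c := Real.cos e with hc
  set s := Real.sin e with hs
  have hA0 : 0 ≤ A := norm_nonneg _
  have hB0 : 0 ≤ B := norm_nonneg _
  have hX0 : 0 ≤ X := norm_nonneg _
  have hs0 : 0 < s := Real.sin_pos_of_pos_of_lt_pi he (lt_of_le_of_lt he2 (by linarith [Real.pi_pos]))
  have hsc : s ^ 2 + c ^ 2 = 1 := Real.sin_sq_add_cos_sq e
  have hkey : A ^ 2 + B ^ 2 - 2 * c * A * B ≤ X ^ 2 := by
    rw [hsq]
    have h1 : -(c * (A * B)) ≤ ((starRingEnd ℂ) lam * z).re := by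
      rw [hre]
      have := mul_le_mul_of_nonneg_left hcos (mul_nonneg hA0 hB0)
      calc -(c * (A * B)) = A * B * (-c) := by ring
        _ ≤ A * B * Real.cos (-Complex.arg lam + Complex.arg z) := by
            apply mul_le_mul_of_nonneg_left hcos (mul_nonneg hA0 hB0)
        _ = _ := by ring
    nlinarith [h1]
  have hsqA : (s * A) ^ 2 ≤ X ^ 2 := by nlinarith [sq_nonneg (c * A - B)]
  have hsqB : (s * B) ^ 2 ≤ X ^ 2 := by nlinarith [sq_nonneg (c * B - A)]
  have hXA : s * A ≤ X := (abs_le_of_sq_le_sq' hsqA hX0).2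
  have hXB : s * B ≤ X := (abs_le_of_sq_le_sq' hsqB hX0).2
  linarith



lemma pow_sub_pow_bound {x y : ℂ} {R : ℝ} (hx : ‖x‖ ≤ R) (hy : ‖y‖ ≤ R) (n : ℕ) :
    ‖x ^ n - y ^ n‖ ≤ n * R ^ (n - 1) * ‖x - y‖ := by
  have hR0 : 0 ≤ R := le_trans (norm_nonneg _) hx
  induction n with
  | zero => simp
  | succ n ih =>
    have key : x ^ (n + 1) - y ^ (n + 1) = x ^ n * (x - y) + (x ^ n - y ^ n) * y := by ring
    calc ‖x ^ (n + 1) - y ^ (n + 1)‖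
        ≤ ‖x ^ n * (x - y)‖ + ‖(x ^ n - y ^ n) * y‖ := by rw [key]; exact norm_add_le _ _
      _ ≤ R ^ n * ‖x - y‖ + (n * R ^ (n - 1) * ‖x - y‖) * R := by
          apply add_le_add
          · rw [norm_mul]
            apply mul_le_mul_of_nonneg_right _ (norm_nonneg _)
            rw [norm_pow]
            exact pow_le_pow_left₀ (norm_nonneg _) hx n
          · rw [norm_mul]
            exact mul_le_mul ih hy (norm_nonneg _) (by positivity)
      _ ≤ (↑(n + 1) : ℝ) * R ^ ((n + 1) - 1) * ‖x - y‖ := by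
          rcases Nat.eq_zero_or_pos n with hn | hn
          · subst hn; simp
          · have e : R ^ (n - 1) * R = R ^ n := by
              rw [← pow_succ, Nat.sub_add_cancel hn]
            have e2 : ((n : ℝ) * R ^ (n - 1) * ‖x - y‖) * R = n * R ^ n * ‖x - y‖ := by
              calc ((n:ℝ) * R ^ (n - 1) * ‖x - y‖) * R
                  = (n:ℝ) * (R ^ (n-1) * R) * ‖x - y‖ := by ring
                _ = (n:ℝ) * R ^ n * ‖x - y‖ := by rw [e]
            rw [e2]
            simp only [Nat.add_sub_cancel]
            push_cast
            nlinarith [norm_nonneg (x - y), pow_nonneg hR0 n]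

lemma prod_sub_prod_bound {ι : Type*} [DecidableEq ι] (s : Finset ι) (f g : ι → ℂ) (B : ι → ℝ)
    (hB : ∀ i, 0 ≤ B i) (hf : ∀ i ∈ s, ‖f i‖ ≤ B i) (hg : ∀ i ∈ s, ‖g i‖ ≤ B i) :
    ‖∏ i ∈ s, f i - ∏ i ∈ s, g i‖ ≤ ∑ i ∈ s, ‖f i - g i‖ * ∏ j ∈ s.erase i, B j := by
  induction s using Finset.induction_on with
  | empty => simp
  | @insert a s' ha ih =>
    have hf' : ∀ i ∈ s', ‖f i‖ ≤ B i := fun i hi => hf i (Finset.mem_insert_of_mem hi)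
    have hg' : ∀ i ∈ s', ‖g i‖ ≤ B i := fun i hi => hg i (Finset.mem_insert_of_mem hi)
    rw [Finset.prod_insert ha, Finset.prod_insert ha]
    have key : f a * ∏ i ∈ s', f i - g a * ∏ i ∈ s', g i
        = (f a - g a) * ∏ i ∈ s', f i + g a * (∏ i ∈ s', f i - ∏ i ∈ s', g i) := by ring
    have hprodf : ‖∏ i ∈ s', f i‖ ≤ ∏ j ∈ s', B j := by
      rw [norm_prod]
      exact Finset.prod_le_prod (fun i _ => norm_nonneg _) hf'
    calc ‖f a * ∏ i ∈ s', f i - g a * ∏ i ∈ s', g i‖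
        ≤ ‖(f a - g a) * ∏ i ∈ s', f i‖ + ‖g a * (∏ i ∈ s', f i - ∏ i ∈ s', g i)‖ := by
          rw [key]; exact norm_add_le _ _
      _ ≤ ‖f a - g a‖ * ∏ j ∈ s', B j
          + B a * ∑ i ∈ s', ‖f i - g i‖ * ∏ j ∈ s'.erase i, B j := by
          gcongr
          · rw [norm_mul]
            exact mul_le_mul_of_nonneg_left hprodf (norm_nonneg _)
          · rw [norm_mul]
            exact mul_le_mul (hg a (Finset.mem_insert_self a s')) (ih hf' hg')
              (norm_nonneg _) (hB a)
      _ = ∑ i ∈ insert a s', ‖f i - g i‖ * ∏ j ∈ (insert a s').erase i, B j := by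
          rw [Finset.sum_insert ha, Finset.erase_insert ha, Finset.mul_sum]
          congr 1
          apply Finset.sum_congr rfl
          intro i hi
          have hia : i ≠ a := fun h => ha (h ▸ hi)
          rw [Finset.erase_insert_of_ne hia.symm,
            Finset.prod_insert (fun h => ha (Finset.mem_of_mem_erase h))]
          ring




noncomputable def Pc (m : ℕ) (a : (Fin d → ℕ) → ℂ) (ζ : Fin d → ℂ) : ℂ :=
  ∑ α : Fin d → Fin (m + 1),
    if mOrder (fun i => (α i : ℕ)) = m then
      a (fun i => (α i : ℕ)) * ∏ i, ζ i ^ (α i : ℕ) else 0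

lemma Pc_iota (m : ℕ) (a : (Fin d → ℕ) → ℂ) (ξ : Fin d → ℝ) :
    Pc m a (iota d ξ) = principalSymbol m a ξ := by
  unfold Pc principalSymbol
  apply Finset.sum_congr rfl
  intro α _
  split_ifs with h
  · congr 1
    unfold xiPow
    push_cast
    rfl
  · rfl

lemma Pc_analytic (m : ℕ) (a : (Fin d → ℕ) → ℂ) (s : Set (Fin d → ℂ)) :
    AnalyticOnNhd ℂ (Pc m a) s := by
  unfold Pc
  apply Finset.analyticOnNhd_fun_sum
  intro α _
  by_cases h : mOrder (fun i => (α i : ℕ)) = m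
  · simp only [if_pos h]
    apply analyticOnNhd_const.mul
    apply Finset.analyticOnNhd_fun_prod
    intro i _
    exact ((ContinuousLinearMap.proj i : (Fin d → ℂ) →L[ℂ] ℂ).analyticOnNhd s).pow _
  · simp only [if_neg h]
    exact analyticOnNhd_const

lemma xiPow_smul (c : ℝ) (ξ : Fin d → ℝ) (α : Fin d → ℕ) :
    xiPow (c • ξ) α = c ^ (mOrder α) * xiPow ξ α := by
  unfold xiPow mOrder
  rw [← Finset.prod_pow_eq_pow_sum, ← Finset.prod_mul_distrib]
  apply Finset.prod_congr rfl
  intro i _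
  rw [Pi.smul_apply, smul_eq_mul, mul_pow]

lemma symbol_smul (m : ℕ) (a : (Fin d → ℕ) → ℂ) (c : ℝ) (ξ : Fin d → ℝ) :
    principalSymbol m a (c • ξ) = (c : ℂ) ^ m * principalSymbol m a ξ := by
  unfold principalSymbol
  rw [Finset.mul_sum]
  apply Finset.sum_congr rfl
  intro α _
  split_ifs with h
  · rw [xiPow_smul, h]
    push_cast
    ring
  · rw [mul_zero]


noncomputable def Mc (m : ℕ) (a : (Fin d → ℕ) → ℂ) (lam : ℂ) (β : Fin d → ℕ)
    (ζ : Fin d → ℂ) : ℂ :=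
  lam ^ ((1 - (mOrder β : ℝ) / m : ℝ) : ℂ) * (∏ i, ζ i ^ β i) * (lam + Pc m a ζ)⁻¹

lemma Mc_iota (m : ℕ) (a : (Fin d → ℕ) → ℂ) (lam : ℂ) (β : Fin d → ℕ) :
    mihlinSymbol m a lam β = fun x => Mc m a lam β (iota d x) := by
  funext x
  unfold mihlinSymbol Mc
  rw [Pc_iota]
  congr 2
  unfold xiPow
  push_cast
  rfl

lemma Mc_analytic (m : ℕ) (a : (Fin d → ℕ) → ℂ) (lam : ℂ) (β : Fin d → ℕ)
    {U : Set (Fin d → ℂ)} (hU : ∀ ζ ∈ U, lam + Pc m a ζ ≠ 0) :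
    AnalyticOnNhd ℂ (Mc m a lam β) U := by
  apply AnalyticOnNhd.mul
  · apply AnalyticOnNhd.mul analyticOnNhd_const
    apply Finset.analyticOnNhd_fun_prod
    intro i _
    exact ((ContinuousLinearMap.proj i : (Fin d → ℂ) →L[ℂ] ℂ).analyticOnNhd U).pow _
  · exact (analyticOnNhd_const.add (Pc_analytic m a U)).inv hU

end Stmt16Aux

set_option maxHeartbeats 2000000

/-- **Mihlin estimates for the symbol, from the proof of Theorem 5.3.**
For every multi-index `γ` there is a constant `C_γ` depending only on `d, γ, m, θ-θ₀, K, κ`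
(and independent of `λ ∈ Σ_{π-θ}`, of `β` with `|β| ≤ m`, and of the coefficients `a_α`)
such that `|ξ^γ ∂^γ ℳ(ξ)| ≤ C_γ` for all `ξ ≠ 0`. -/
theorem stmt16 (d m : ℕ) (hd : 1 ≤ d) (hm : 1 ≤ m) (δ : ℝ) (hδ : 0 < δ)
    (κ K : ℝ) (hκ : κ ∈ Set.Ioo (0:ℝ) 1) (hK : 0 < K) (γ : Fin d → ℕ) :
    ∃ C : ℝ, 0 < C ∧
      ∀ θ₀ θ : ℝ, θ₀ ∈ Set.Ioo 0 Real.pi → θ ∈ Set.Ioo θ₀ Real.pi → θ - θ₀ = δ →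
      ∀ a : (Fin d → ℕ) → ℂ,
        (∀ α : Fin d → ℕ, mOrder α = m → ‖a α‖ ≤ K) →
        (∀ ξ : Fin d → ℝ, ‖ξ‖ = 1 → principalSymbol m a ξ ∈ sector θ₀ ∧
          κ ≤ ‖principalSymbol m a ξ‖) →
      ∀ lam : ℂ, lam ∈ sector (Real.pi - θ) →
      ∀ β : Fin d → ℕ, mOrder β ≤ m →
      ∀ ξ : Fin d → ℝ, ξ ≠ 0 →
        ‖(xiPow ξ γ : ℂ) * mpderiv γ (mihlinSymbol m a lam β) ξ‖ ≤ C := by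
  classical
  obtain ⟨hκ0, hκ1⟩ := hκ
  have hm0 : (0:ℝ) < m := by exact_mod_cast hm
  set N := mOrder γ with hNdef
  set δ' := min δ (Real.pi / 2) with hδ'def
  have hδ'0 : 0 < δ' := lt_min hδ (by positivity)
  have hδ'2 : δ' ≤ Real.pi / 2 := min_le_right _ _
  set s := Real.sin δ' with hsdef
  have hs0 : 0 < s :=
    Real.sin_pos_of_pos_of_lt_pi hδ'0 (lt_of_le_of_lt hδ'2 (by linarith [Real.pi_pos]))
  have hs1 : s ≤ 1 := Real.sin_le_one _
  set L0 : ℝ := (m+1)^d * K * m * 2^m with hL0def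
  have hL00 : 0 < L0 := by
    apply mul_pos (mul_pos (mul_pos _ hK) hm0)
    · positivity
    · positivity
  set ε1 : ℝ := s * κ / 4 with hε1def
  have hε10 : 0 < ε1 := by positivity
  set r : ℝ := min 1 (s * κ / (4 * L0)) with hrdef
  have hr0 : 0 < r := lt_min one_pos (by positivity)
  have hr1 : r ≤ 1 := min_le_left _ _
  set M0 : ℝ := 2^m / ε1 with hM0def
  have hM00 : 0 < M0 := by positivity
  refine ⟨M0 * (N+1)^N / r^N, by positivity, ?_⟩
  intro θ₀ θ hθ₀ hθ hδeq a ha hA lam hlam β hβ ξ hξ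
  obtain ⟨hlam0, hlamarg⟩ := hlam
  set t : ℝ := ‖ξ‖ with htdef
  have ht : 0 < t := norm_pos_iff.mpr hξ
  set X : ℝ := ‖lam‖ + t^m with hXdef
  have hX0 : 0 < X := by positivity
  -- lower bound at the real center and on the whole real space
  have hlow : ∀ x : Fin d → ℝ, x ≠ 0 →
      2 * ε1 * (‖lam‖ + ‖x‖^m) ≤ ‖lam + principalSymbol m a x‖ := by
    intro x hx
    have htx : 0 < ‖x‖ := norm_pos_iff.mpr hx
    set u : Fin d → ℝ := ‖x‖⁻¹ • x with hu_def
    have hu : ‖u‖ = 1 := by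
      rw [hu_def, norm_smul, norm_inv, norm_norm, inv_mul_cancel₀ htx.ne']
    obtain ⟨⟨hAu0, hAuarg⟩, hAuκ⟩ := hA u hu
    have hx_eq : x = ‖x‖ • u := by
      rw [hu_def, smul_smul, mul_inv_cancel₀ htx.ne', one_smul]
    have hAx : principalSymbol m a x = ((‖x‖^m : ℝ) : ℂ) * principalSymbol m a u := by
      conv_lhs => rw [hx_eq]
      rw [Stmt16Aux.symbol_smul]
      push_cast
      ring
    have hAx0 : principalSymbol m a x ≠ 0 := by
      rw [hAx]
      exact mul_ne_zero (Complex.ofReal_ne_zero.mpr (by positivity)) hAu0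
    have hAxarg : |Complex.arg (principalSymbol m a x)| ≤ θ₀ := by
      rw [hAx, Complex.arg_real_mul _ (by positivity : (0:ℝ) < ‖x‖^m)]
      exact hAuarg.le
    have hAxnorm : κ * ‖x‖^m ≤ ‖principalSymbol m a x‖ := by
      rw [hAx, norm_mul, Complex.norm_real, Real.norm_eq_abs,
        _root_.abs_of_nonneg (by positivity : (0:ℝ) ≤ ‖x‖^m)]
      calc κ * ‖x‖^m = ‖x‖^m * κ := by ring
        _ ≤ ‖x‖^m * ‖principalSymbol m a u‖ :=
            mul_le_mul_of_nonneg_left hAuκ (by positivity)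
        _ = _ := by ring
    -- apply the sector estimate
    have hsec := Stmt16Aux.sector_lower hlam0 hAx0 hlamarg.le hAxarg
      (by
        have : Real.pi - θ + θ₀ = Real.pi - δ := by rw [← hδeq]; ring
        rw [this]
        have : δ' ≤ δ := min_le_left _ _
        linarith) hδ'0 hδ'2
    have h1 : s * κ * (‖lam‖ + ‖x‖^m) ≤ s * (‖lam‖ + ‖principalSymbol m a x‖) := by
      have h2 : κ * ‖lam‖ ≤ ‖lam‖ := by nlinarith [norm_nonneg lam]
      have h3 : s * (κ * ‖lam‖ + κ * ‖x‖^m) ≤ s * (‖lam‖ + ‖principalSymbol m a x‖) := by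
        apply mul_le_mul_of_nonneg_left _ hs0.le
        linarith [hAxnorm]
      calc s * κ * (‖lam‖ + ‖x‖^m) = s * (κ * ‖lam‖ + κ * ‖x‖^m) := by ring
        _ ≤ _ := h3
    calc 2 * ε1 * (‖lam‖ + ‖x‖^m) = s * κ * (‖lam‖ + ‖x‖^m) / 2 := by
          rw [hε1def]; ring
      _ ≤ s * (‖lam‖ + ‖principalSymbol m a x‖) / 2 := by linarith
      _ ≤ ‖lam + principalSymbol m a x‖ := hsec
  have hA0 : principalSymbol m a 0 = 0 := by
    have h0 : (0 : Fin d → ℝ) = (0:ℝ) • (0 : Fin d → ℝ) := by simp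
    have := Stmt16Aux.symbol_smul m a 0 (0 : Fin d → ℝ)
    rw [← h0] at this
    rw [this]
    simp [zero_pow (by omega : m ≠ 0)]
  -- the open set U
  set U : Set (Fin d → ℂ) := {ζ | lam + Stmt16Aux.Pc m a ζ ≠ 0} with hUdef
  have hUopen : IsOpen U := by
    have hc : Continuous (fun ζ => lam + Stmt16Aux.Pc m a ζ) := by
      apply continuous_const.add
      have := (Stmt16Aux.Pc_analytic m a (univ : Set (Fin d → ℂ))).continuousOn
      rwa [continuousOn_univ] at this
    exact isOpen_compl_singleton.preimage hc
  have hUreal : ∀ x : Fin d → ℝ, Stmt16Aux.iota d x ∈ U := by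
    intro x
    show lam + Stmt16Aux.Pc m a (Stmt16Aux.iota d x) ≠ 0
    rw [Stmt16Aux.Pc_iota]
    rcases eq_or_ne x 0 with hx | hx
    · rw [hx, hA0, add_zero]; exact hlam0
    · have := hlow x hx
      have hpos : 0 < 2 * ε1 * (‖lam‖ + ‖x‖^m) := by
        have : 0 < ‖x‖ := norm_pos_iff.mpr hx
        positivity
      intro hc
      rw [hc, norm_zero] at this
      linarith
  -- perturbation estimate on the polydisc
  have hpert : ∀ ζ ∈ Metric.closedBall (Stmt16Aux.iota d ξ) (r*t),
      ‖Stmt16Aux.Pc m a ζ - Stmt16Aux.Pc m a (Stmt16Aux.iota d ξ)‖ ≤ L0 * r * t^m := by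
    intro ζ hζ
    rw [Metric.mem_closedBall] at hζ
    have hζi : ∀ i, ‖ζ i - (ξ i : ℂ)‖ ≤ r * t := by
      intro i
      have hdist := dist_le_pi_dist ζ (Stmt16Aux.iota d ξ) i
      rw [dist_eq_norm] at hdist
      exact le_trans hdist hζ
    have hζb : ∀ i, ‖ζ i‖ ≤ 2 * t := by
      intro i
      have h1 : ‖(ξ i : ℂ)‖ ≤ t := by
        rw [Complex.norm_real]
        exact norm_le_pi_norm ξ i
      calc ‖ζ i‖ = ‖(ζ i - (ξ i : ℂ)) + (ξ i : ℂ)‖ := by ring_nf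
        _ ≤ ‖ζ i - (ξ i : ℂ)‖ + ‖(ξ i : ℂ)‖ := norm_add_le _ _
        _ ≤ r * t + t := add_le_add (hζi i) h1
        _ ≤ 2 * t := by nlinarith
    have hξb : ∀ i, ‖(ξ i : ℂ)‖ ≤ 2 * t := by
      intro i
      rw [Complex.norm_real]
      calc |ξ i| ≤ t := norm_le_pi_norm ξ i
        _ ≤ 2 * t := by linarith
    -- per-monomial estimate
    have hmono : ∀ α : Fin d → Fin (m+1), mOrder (fun i => (α i : ℕ)) = m →
        ‖(∏ i, ζ i ^ (α i : ℕ)) - ∏ i, ((ξ i : ℂ)) ^ (α i : ℕ)‖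
          ≤ m * (2*t)^(m-1) * (r*t) := by
      intro α hα
      have hB : ∀ i : Fin d, (0:ℝ) ≤ (2*t)^((α i : ℕ)) := fun i => by positivity
      have hfb : ∀ i ∈ Finset.univ, ‖ζ i ^ (α i : ℕ)‖ ≤ (2*t)^((α i : ℕ)) := by
        intro i _
        rw [norm_pow]
        exact pow_le_pow_left₀ (norm_nonneg _) (hζb i) _
      have hgb : ∀ i ∈ Finset.univ, ‖((ξ i : ℂ)) ^ (α i : ℕ)‖ ≤ (2*t)^((α i : ℕ)) := by
        intro i _
        rw [norm_pow]
        exact pow_le_pow_left₀ (norm_nonneg _) (hξb i) _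
      have key := Stmt16Aux.prod_sub_prod_bound Finset.univ
        (fun i => ζ i ^ (α i : ℕ)) (fun i => ((ξ i : ℂ)) ^ (α i : ℕ))
        (fun i => (2*t)^((α i : ℕ))) hB hfb hgb
      refine le_trans key ?_
      have hterm : ∀ i : Fin d,
          ‖ζ i ^ (α i : ℕ) - ((ξ i : ℂ)) ^ (α i : ℕ)‖
            * ∏ j ∈ Finset.univ.erase i, (2*t)^((α j : ℕ))
          ≤ ((α i : ℕ) : ℝ) * (2*t)^(m-1) * (r*t) := by
        intro i
        have hprod : ∏ j ∈ Finset.univ.erase i, (2*t)^((α j : ℕ))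
            = (2*t)^(m - (α i : ℕ)) := by
          rw [Finset.prod_pow_eq_pow_sum]
          congr 1
          have h1 : ∑ j ∈ Finset.univ.erase i, (α j : ℕ) + (α i : ℕ) = ∑ j, (α j : ℕ) :=
            Finset.sum_erase_add _ _ (Finset.mem_univ i)
          have hsum : ∑ j, (α j : ℕ) = m := hα
          omega
        rw [hprod]
        have hdiff := Stmt16Aux.pow_sub_pow_bound (hζb i) (hξb i) ((α i : ℕ))
        rcases Nat.eq_zero_or_pos (α i : ℕ) with h0 | hpos
        · rw [h0]; simp
        · have hαile : (α i : ℕ) ≤ m := by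
            have hsum : ∑ j, (α j : ℕ) = m := hα
            have := Finset.single_le_sum (f := fun j => (α j : ℕ))
              (fun j _ => Nat.zero_le _) (Finset.mem_univ i)
            omega
          have hexp : ((α i : ℕ) - 1) + (m - (α i : ℕ)) = m - 1 := by omega
          calc ‖ζ i ^ (α i : ℕ) - ((ξ i : ℂ)) ^ (α i : ℕ)‖ * (2*t)^(m - (α i : ℕ))
              ≤ (((α i : ℕ) : ℝ) * (2*t)^((α i : ℕ) - 1) * ‖ζ i - (ξ i : ℂ)‖)
                  * (2*t)^(m - (α i : ℕ)) := by
                apply mul_le_mul_of_nonneg_right hdiff (by positivity)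
            _ ≤ (((α i : ℕ) : ℝ) * (2*t)^((α i : ℕ) - 1) * (r*t)) * (2*t)^(m - (α i : ℕ)) := by
                apply mul_le_mul_of_nonneg_right _ (by positivity)
                apply mul_le_mul_of_nonneg_left (hζi i) (by positivity)
            _ = ((α i : ℕ) : ℝ) * ((2*t)^((α i : ℕ) - 1) * (2*t)^(m - (α i : ℕ))) * (r*t) := by
                ring
            _ = ((α i : ℕ) : ℝ) * (2*t)^(m-1) * (r*t) := by
                rw [← pow_add, hexp]
      calc ∑ i, ‖ζ i ^ (α i : ℕ) - ((ξ i : ℂ)) ^ (α i : ℕ)‖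
              * ∏ j ∈ Finset.univ.erase i, (2*t)^((α j : ℕ))
          ≤ ∑ i, ((α i : ℕ) : ℝ) * (2*t)^(m-1) * (r*t) :=
            Finset.sum_le_sum (fun i _ => hterm i)
        _ = (∑ i, ((α i : ℕ) : ℝ)) * ((2*t)^(m-1) * (r*t)) := by
            rw [Finset.sum_mul]
            apply Finset.sum_congr rfl
            intros; ring
        _ = m * (2*t)^(m-1) * (r*t) := by
            have : (∑ i, ((α i : ℕ) : ℝ)) = (m:ℝ) := by
              rw [← Nat.cast_sum]
              exact_mod_cast congrArg (Nat.cast (R := ℝ)) hα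
            rw [this]; ring
    -- sum over multi-indices
    have hdiff_sum : Stmt16Aux.Pc m a ζ - Stmt16Aux.Pc m a (Stmt16Aux.iota d ξ)
        = ∑ α : Fin d → Fin (m+1),
            (if mOrder (fun i => (α i : ℕ)) = m then
              a (fun i => (α i : ℕ)) * ((∏ i, ζ i ^ (α i : ℕ)) - ∏ i, ((ξ i : ℂ)) ^ (α i : ℕ))
            else 0) := by
      unfold Stmt16Aux.Pc
      rw [← Finset.sum_sub_distrib]
      apply Finset.sum_congr rfl
      intro α _
      split_ifs with h
      · simp only [Stmt16Aux.iota_apply]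
        ring
      · simp
    rw [hdiff_sum]
    calc ‖∑ α : Fin d → Fin (m+1), (if mOrder (fun i => (α i : ℕ)) = m then
              a (fun i => (α i : ℕ)) * ((∏ i, ζ i ^ (α i : ℕ)) - ∏ i, ((ξ i : ℂ)) ^ (α i : ℕ))
            else 0)‖
        ≤ ∑ α : Fin d → Fin (m+1), K * (m * (2*t)^(m-1) * (r*t)) := by
          apply norm_sum_le_of_le
          intro α _
          split_ifs with h
          · rw [norm_mul]
            apply mul_le_mul (ha _ h) (hmono α h) (norm_nonneg _) hK.le
          · rw [norm_zero]
            positivity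
      _ = (m+1)^d * (K * (m * (2*t)^(m-1) * (r*t))) := by
          rw [Finset.sum_const]
          simp [Fintype.card_fun]
      _ ≤ L0 * r * t^m := by
          rw [hL0def]
          have h2t : (2*t)^(m-1) = 2^(m-1) * t^(m-1) := mul_pow 2 t (m-1)
          rw [h2t]
          have htm : t^(m-1) * t = t^m := by
            rw [← pow_succ, Nat.sub_add_cancel hm]
          have h2m : (2:ℝ)^(m-1) ≤ 2^m := by
            apply pow_le_pow_right₀ (by norm_num) (Nat.sub_le m 1)
          calc ((m:ℝ)+1)^d * (K * ((m:ℝ) * (2^(m-1) * t^(m-1)) * (r*t)))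
              = ((m:ℝ)+1)^d * K * (m:ℝ) * 2^(m-1) * r * (t^(m-1) * t) := by ring
            _ = ((m:ℝ)+1)^d * K * (m:ℝ) * 2^(m-1) * r * t^m := by rw [htm]
            _ ≤ ((m:ℝ)+1)^d * K * (m:ℝ) * 2^m * r * t^m := by
                apply mul_le_mul_of_nonneg_right _ (by positivity)
                apply mul_le_mul_of_nonneg_right _ hr0.le
                apply mul_le_mul_of_nonneg_left h2m (by positivity)
            _ = ((m:ℝ)+1)^d * K * (m:ℝ) * 2^m * r * t^m := rfl
  -- coordinate bounds on the polydisc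
  have hζb' : ∀ ζ ∈ Metric.closedBall (Stmt16Aux.iota d ξ) (r*t), ∀ i, ‖ζ i‖ ≤ 2*t := by
    intro ζ hζ i
    rw [Metric.mem_closedBall] at hζ
    have h1 : ‖ζ i - (ξ i : ℂ)‖ ≤ r * t := by
      have hdist := dist_le_pi_dist ζ (Stmt16Aux.iota d ξ) i
      rw [dist_eq_norm] at hdist
      exact le_trans hdist hζ
    have h2 : ‖(ξ i : ℂ)‖ ≤ t := by
      rw [Complex.norm_real]; exact norm_le_pi_norm ξ i
    calc ‖ζ i‖ = ‖(ζ i - (ξ i : ℂ)) + (ξ i : ℂ)‖ := by ring_nf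
      _ ≤ ‖ζ i - (ξ i : ℂ)‖ + ‖(ξ i : ℂ)‖ := norm_add_le _ _
      _ ≤ r * t + t := add_le_add h1 h2
      _ ≤ 2 * t := by nlinarith
  -- lower bound on the polydisc
  have hball_lower : ∀ ζ ∈ Metric.closedBall (Stmt16Aux.iota d ξ) (r*t),
      ε1 * X ≤ ‖lam + Stmt16Aux.Pc m a ζ‖ := by
    intro ζ hζ
    have hcen : 2 * ε1 * X ≤ ‖lam + Stmt16Aux.Pc m a (Stmt16Aux.iota d ξ)‖ := by
      rw [Stmt16Aux.Pc_iota]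
      exact hlow ξ hξ
    have hper := hpert ζ hζ
    have hLr : L0 * r ≤ ε1 := by
      have h1 : r ≤ s * κ / (4 * L0) := min_le_right _ _
      calc L0 * r ≤ L0 * (s * κ / (4 * L0)) := mul_le_mul_of_nonneg_left h1 hL00.le
        _ = s * κ / 4 := by field_simp
        _ = ε1 := by rw [hε1def]
    have hper2 : ‖Stmt16Aux.Pc m a ζ - Stmt16Aux.Pc m a (Stmt16Aux.iota d ξ)‖ ≤ ε1 * X := by
      calc ‖Stmt16Aux.Pc m a ζ - Stmt16Aux.Pc m a (Stmt16Aux.iota d ξ)‖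
          ≤ L0 * r * t^m := hper
        _ ≤ ε1 * t^m := mul_le_mul_of_nonneg_right hLr (by positivity)
        _ ≤ ε1 * X := by
            apply mul_le_mul_of_nonneg_left _ hε10.le
            rw [hXdef]; linarith [norm_nonneg lam]
    have htri : ‖lam + Stmt16Aux.Pc m a (Stmt16Aux.iota d ξ)‖
        ≤ ‖lam + Stmt16Aux.Pc m a ζ‖
          + ‖Stmt16Aux.Pc m a ζ - Stmt16Aux.Pc m a (Stmt16Aux.iota d ξ)‖ := by
      have e : lam + Stmt16Aux.Pc m a (Stmt16Aux.iota d ξ)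
          = (lam + Stmt16Aux.Pc m a ζ)
            - (Stmt16Aux.Pc m a ζ - Stmt16Aux.Pc m a (Stmt16Aux.iota d ξ)) := by ring
      rw [e]
      exact norm_sub_le _ _
    linarith
  have hεX : 0 < ε1 * X := mul_pos hε10 hX0
  have hUsub : Metric.closedBall (Stmt16Aux.iota d ξ) (r*t) ⊆ U := by
    intro ζ hζ
    have := hball_lower ζ hζ
    show lam + Stmt16Aux.Pc m a ζ ≠ 0
    intro hc
    rw [hc, norm_zero] at this
    linarith
  -- upper bound for Mc on the polydisc
  have hMbound : ∀ ζ ∈ Metric.closedBall (Stmt16Aux.iota d ξ) (r*t),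
      ‖Stmt16Aux.Mc m a lam β ζ‖ ≤ M0 := by
    intro ζ hζ
    have hbm : ((mOrder β : ℕ):ℝ) ≤ m := by exact_mod_cast hβ
    have hp0 : 0 ≤ 1 - ((mOrder β : ℕ):ℝ)/m := by
      rw [sub_nonneg]
      exact (div_le_one hm0).mpr hbm
    have hw : ‖lam ^ ((1 - ((mOrder β : ℕ) : ℝ) / m : ℝ) : ℂ)‖
        = ‖lam‖ ^ (1 - ((mOrder β : ℕ):ℝ)/m) := by
      rw [Complex.norm_cpow_of_ne_zero hlam0]
      simp
    have hP : ‖∏ i, ζ i ^ β i‖ ≤ (2*t)^(mOrder β) := by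
      rw [norm_prod]
      calc ∏ i, ‖ζ i ^ β i‖ ≤ ∏ i, (2*t)^(β i) := by
            apply Finset.prod_le_prod (fun i _ => norm_nonneg _)
            intro i _
            rw [norm_pow]
            exact pow_le_pow_left₀ (norm_nonneg _) (hζb' ζ hζ i) _
        _ = (2*t)^(mOrder β) := Finset.prod_pow_eq_pow_sum _ _ _
    have hinv : ‖(lam + Stmt16Aux.Pc m a ζ)⁻¹‖ ≤ (ε1 * X)⁻¹ := by
      rw [norm_inv]
      exact inv_anti₀ hεX (hball_lower ζ hζ)
    have hXlam : ‖lam‖ ≤ X := by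
      rw [hXdef]; nlinarith [pow_pos ht m]
    have hXt : t^m ≤ X := by rw [hXdef]; linarith [norm_nonneg lam]
    have h1 : ‖lam‖ ^ (1 - ((mOrder β : ℕ):ℝ)/m) ≤ X ^ (1 - ((mOrder β : ℕ):ℝ)/m) :=
      Real.rpow_le_rpow (norm_nonneg _) hXlam hp0
    have h2 : t^(mOrder β) ≤ X ^ (((mOrder β : ℕ):ℝ)/m) := by
      have e1 : (t:ℝ)^(mOrder β) = (t ^ ((m:ℕ):ℝ)) ^ (((mOrder β : ℕ):ℝ)/m) := by
        rw [← Real.rpow_natCast t (mOrder β), ← Real.rpow_mul ht.le]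
        congr 1
        field_simp
      rw [e1, Real.rpow_natCast t m]
      exact Real.rpow_le_rpow (by positivity) hXt (by positivity)
    have h3 : ‖lam‖ ^ (1 - ((mOrder β : ℕ):ℝ)/m) * t^(mOrder β) ≤ X := by
      calc ‖lam‖ ^ (1 - ((mOrder β : ℕ):ℝ)/m) * t^(mOrder β)
          ≤ X ^ (1 - ((mOrder β : ℕ):ℝ)/m) * X ^ (((mOrder β : ℕ):ℝ)/m) :=
            mul_le_mul h1 h2 (by positivity) (by positivity)
        _ = X ^ ((1 - ((mOrder β : ℕ):ℝ)/m) + ((mOrder β : ℕ):ℝ)/m) :=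
            (Real.rpow_add hX0 _ _).symm
        _ = X := by
            rw [show (1 - ((mOrder β : ℕ):ℝ)/m) + ((mOrder β : ℕ):ℝ)/m = 1 by ring,
              Real.rpow_one]
    show ‖lam ^ ((1 - ((mOrder β : ℕ) : ℝ) / m : ℝ) : ℂ) * (∏ i, ζ i ^ β i)
        * (lam + Stmt16Aux.Pc m a ζ)⁻¹‖ ≤ M0
    rw [norm_mul, norm_mul, hw]
    calc ‖lam‖ ^ (1 - ((mOrder β : ℕ):ℝ)/m) * ‖∏ i, ζ i ^ β i‖
          * ‖(lam + Stmt16Aux.Pc m a ζ)⁻¹‖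
        ≤ ‖lam‖ ^ (1 - ((mOrder β : ℕ):ℝ)/m) * (2*t)^(mOrder β) * (ε1 * X)⁻¹ := by
          apply mul_le_mul _ hinv (norm_nonneg _) (by positivity)
          exact mul_le_mul_of_nonneg_left hP (by positivity)
      _ = (‖lam‖ ^ (1 - ((mOrder β : ℕ):ℝ)/m) * t^(mOrder β)) * 2^(mOrder β)
            * (ε1 * X)⁻¹ := by
          rw [mul_pow]
          ring
      _ ≤ X * 2^m * (ε1 * X)⁻¹ := by
          apply mul_le_mul_of_nonneg_right _ (by positivity)
          exact mul_le_mul h3 (pow_le_pow_right₀ (by norm_num) hβ) (by positivity) hX0.le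
      _ = M0 := by
          rw [hM0def]
          field_simp
  -- analyticity and transfer to ℝ^d
  have hUne : ∀ ζ ∈ U, lam + Stmt16Aux.Pc m a ζ ≠ 0 := fun ζ hζ => hζ
  have hMcan : AnalyticOnNhd ℂ (Stmt16Aux.Mc m a lam β) U :=
    Stmt16Aux.Mc_analytic m a lam β hUne
  have htrans : mpderiv γ (mihlinSymbol m a lam β)
      = fun x => ((List.finRange d).foldr (fun i g => Stmt16Aux.DpPow i (γ i) g)
          (Stmt16Aux.Mc m a lam β)) (Stmt16Aux.iota d x) := by
    rw [Stmt16Aux.Mc_iota m a lam β]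
    exact Stmt16Aux.foldr_comp hMcan hUreal γ (List.finRange d)
  -- Cauchy estimates
  set h : ℝ := (r*t)/(N+1) with hhdef
  have hN1 : (0:ℝ) < (N:ℝ) + 1 := by positivity
  have hh0 : 0 < h := div_pos (mul_pos hr0 ht) hN1
  have hNsum : ((List.finRange d).map γ).sum = N := (Fin.sum_univ_def γ).symm
  have hmem : Stmt16Aux.iota d ξ ∈ Metric.closedBall (Stmt16Aux.iota d ξ)
      (r*t - (((List.finRange d).map γ).sum : ℕ) * h) := by
    rw [Metric.mem_closedBall, dist_self, hNsum]
    have e : r*t - (N:ℝ)*h = (r*t)/((N:ℝ)+1) := by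
      rw [hhdef]
      field_simp
      ring
    rw [e]
    positivity
  have hfold := Stmt16Aux.cauchy_foldr hMcan hUsub hMbound hh0 γ (List.finRange d)
    (Stmt16Aux.iota d ξ) hmem
  rw [hNsum] at hfold
  -- final assembly
  have happ : mpderiv γ (mihlinSymbol m a lam β) ξ
      = ((List.finRange d).foldr (fun i g => Stmt16Aux.DpPow i (γ i) g)
          (Stmt16Aux.Mc m a lam β)) (Stmt16Aux.iota d ξ) := by
    rw [htrans]
  have hxipow : ‖((xiPow ξ γ : ℝ) : ℂ)‖ ≤ t^N := by
    rw [Complex.norm_real, Real.norm_eq_abs]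
    unfold xiPow
    calc |∏ i, ξ i ^ γ i| = ∏ i, |ξ i ^ γ i| := Finset.abs_prod _ _
      _ = ∏ i, |ξ i| ^ γ i := by
          apply Finset.prod_congr rfl
          intro i _
          exact abs_pow _ _
      _ ≤ ∏ i, t ^ γ i := by
          apply Finset.prod_le_prod (fun i _ => by positivity)
          intro i _
          exact pow_le_pow_left₀ (abs_nonneg _) (norm_le_pi_norm ξ i) _
      _ = t ^ N := Finset.prod_pow_eq_pow_sum _ _ _
  have hfinal : t^N * (M0 / h^N) = M0 * ((N:ℝ)+1)^N / r^N := by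
    rw [hhdef, div_pow, mul_pow]
    field_simp
  calc ‖(xiPow ξ γ : ℂ) * mpderiv γ (mihlinSymbol m a lam β) ξ‖
      = ‖((xiPow ξ γ : ℝ) : ℂ)‖ * ‖mpderiv γ (mihlinSymbol m a lam β) ξ‖ := norm_mul _ _
    _ ≤ t^N * (M0 / h^N) := by
        apply mul_le_mul hxipow ?_ (norm_nonneg _) (by positivity)
        exact le_of_eq_of_le (congrArg norm happ) hfold
    _ = M0 * ((N:ℝ)+1)^N / r^N := hfinal
end

section
/- Let κ, ε ∈ (0,1), let μ ∈ ℕ with μ ≥ 1 and let η ∈ [0,1] with η ≤ μ. Then for all ρ > 0, all r ≥ κ and all ψ, φ ∈ ℝ with cos(ψ - φ) ≥ -(1 - ε²), one has ρ^η · |ρe^{iψ} + re^{iφ}|^{-μ} ≤ κ^{η-μ} ε^{-μ}. -/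
open Real Complex

/-- Let `κ, ε ∈ (0,1)`, `μ ∈ ℕ` with `μ ≥ 1` and `η ∈ [0,1]` with `η ≤ μ`.
Then for all `ρ > 0`, all `r ≥ κ` and all `ψ, φ ∈ ℝ` with `cos (ψ - φ) ≥ -(1 - ε²)`, one has
`ρ^η * |ρ e^{iψ} + r e^{iφ}|^{-μ} ≤ κ^{η-μ} ε^{-μ}`. -/
theorem stmt17 (κ ε : ℝ) (hκ : κ ∈ Set.Ioo (0:ℝ) 1) (hε : ε ∈ Set.Ioo (0:ℝ) 1)
    (μ : ℕ) (hμ : 1 ≤ μ) (η : ℝ) (hη0 : 0 ≤ η) (hη1 : η ≤ 1) (hημ : η ≤ (μ : ℝ))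
    (ρ r ψ φ : ℝ) (hρ : 0 < ρ) (hr : κ ≤ r)
    (hcos : -(1 - ε ^ 2) ≤ Real.cos (ψ - φ)) :
    ρ ^ η * ‖(ρ : ℂ) * Complex.exp (Complex.I * ψ) +
        (r : ℂ) * Complex.exp (Complex.I * φ)‖ ^ (-(μ : ℝ)) ≤
      κ ^ (η - (μ : ℝ)) * ε ^ (-(μ : ℝ)) := by
  obtain ⟨hκ0, hκ1⟩ := hκ
  obtain ⟨hε0, hε1⟩ := hε
  have hr0 : 0 < r := lt_of_lt_of_le hκ0 hr
  set z : ℂ := (ρ : ℂ) * Complex.exp (Complex.I * ψ) + (r : ℂ) * Complex.exp (Complex.I * φ)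
    with hz_def
  have hM0 : 0 < max ρ r := lt_max_of_lt_left hρ
  have hεM : 0 < ε * max ρ r := mul_pos hε0 hM0
  have hzsq : ‖z‖ ^ 2 = ρ ^ 2 + r ^ 2 + 2 * ρ * r * Real.cos (ψ - φ) := by
    have h1 : Complex.I * (ψ : ℂ) = (ψ : ℂ) * Complex.I := mul_comm _ _
    have h2 : Complex.I * (φ : ℂ) = (φ : ℂ) * Complex.I := mul_comm _ _
    rw [hz_def, h1, h2, Complex.sq_norm, Complex.normSq_apply]
    simp [Complex.exp_ofReal_mul_I_re, Complex.exp_ofReal_mul_I_im, Real.cos_sub]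
    nlinarith [Real.sin_sq_add_cos_sq ψ, Real.sin_sq_add_cos_sq φ]
  have hkey : (ε * max ρ r) ^ 2 ≤ ‖z‖ ^ 2 := by
    rw [hzsq]
    have hc : 0 ≤ 2 * ρ * r * (Real.cos (ψ - φ) + (1 - ε ^ 2)) := by
      apply mul_nonneg (by positivity) (by linarith)
    have hA : 0 ≤ (1 - ε ^ 2) * (ρ - r) ^ 2 :=
      mul_nonneg (by nlinarith [mul_pos hε0 hε0]) (sq_nonneg (ρ - r))
    rcases max_cases ρ r with ⟨h, _⟩ | ⟨h, _⟩ <;> rw [h] <;>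
      nlinarith [hc, hA, mul_nonneg (sq_nonneg ε) (sq_nonneg r), mul_nonneg (sq_nonneg ε) (sq_nonneg ρ)]
  have hz1 : ε * max ρ r ≤ ‖z‖ :=
    (pow_le_pow_iff_left₀ hεM.le (norm_nonneg z) (by norm_num)).mp hkey
  have hμ0 : -(μ : ℝ) ≤ 0 := neg_nonpos.mpr (Nat.cast_nonneg μ)
  have step1 : ‖z‖ ^ (-(μ : ℝ)) ≤ (ε * max ρ r) ^ (-(μ : ℝ)) :=
    Real.rpow_le_rpow_of_nonpos hεM hz1 hμ0
  have split : (ε * max ρ r) ^ (-(μ : ℝ)) = ε ^ (-(μ : ℝ)) * (max ρ r) ^ (-(μ : ℝ)) :=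
    Real.mul_rpow hε0.le hM0.le
  have hρη : 0 ≤ ρ ^ η := Real.rpow_nonneg hρ.le η
  have hmain : ρ ^ η * (max ρ r) ^ (-(μ : ℝ)) ≤ κ ^ (η - (μ : ℝ)) := by
    rcases le_total ρ r with h | h
    · rw [max_eq_right h]
      have h1 : ρ ^ η ≤ r ^ η := Real.rpow_le_rpow hρ.le h hη0
      have h2 : r ^ η * r ^ (-(μ : ℝ)) = r ^ (η - (μ : ℝ)) := by
        rw [← Real.rpow_add hr0]; ring_nf
      calc ρ ^ η * r ^ (-(μ : ℝ)) ≤ r ^ η * r ^ (-(μ : ℝ)) := by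
            apply mul_le_mul_of_nonneg_right h1 (Real.rpow_nonneg hr0.le _)
        _ = r ^ (η - (μ : ℝ)) := h2
        _ ≤ κ ^ (η - (μ : ℝ)) := Real.rpow_le_rpow_of_nonpos hκ0 hr (by linarith)
    · rw [max_eq_left h]
      have h2 : ρ ^ η * ρ ^ (-(μ : ℝ)) = ρ ^ (η - (μ : ℝ)) := by
        rw [← Real.rpow_add hρ]; ring_nf
      calc ρ ^ η * ρ ^ (-(μ : ℝ)) = ρ ^ (η - (μ : ℝ)) := h2
        _ ≤ r ^ (η - (μ : ℝ)) := Real.rpow_le_rpow_of_nonpos hr0 h (by linarith)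
        _ ≤ κ ^ (η - (μ : ℝ)) := Real.rpow_le_rpow_of_nonpos hκ0 hr (by linarith)
  calc ρ ^ η * ‖z‖ ^ (-(μ : ℝ)) ≤ ρ ^ η * (ε ^ (-(μ : ℝ)) * (max ρ r) ^ (-(μ : ℝ))) := by
        rw [← split]; exact mul_le_mul_of_nonneg_left step1 hρη
    _ = (ρ ^ η * (max ρ r) ^ (-(μ : ℝ))) * ε ^ (-(μ : ℝ)) := by ring
    _ ≤ κ ^ (η - (μ : ℝ)) * ε ^ (-(μ : ℝ)) := by
        apply mul_le_mul_of_nonneg_right hmain (Real.rpow_nonneg hε0.le _)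
end
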